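/- arXiv:math/0608503 — 4 statements merged into one kernel-verified Lean document; each statement's English description precedes it below -/
import Mathlib

section
/- Let p : 𝐄 ⥤ 𝐁 be a structure on 𝐁 (faithful, lifting isomorphisms, with skeletal fibers), let B be an object of 𝐁 and E', E'' objects with p(E') = B = p(E''). Then the following are equivalent: (a) E' = E''; (b) for every object E of 𝐄, the image of Hom_𝐄(E, E') under p equals the image of Hom_𝐄(E, E'') under p (both being subsets of Hom_𝐁(p(E), B)); (c) for every object E, the image of Hom_𝐄(E', E) under p equals the image of Hom_𝐄(E'', E) under p; (d) for every object E with p(E) = B, the set of vertical morphisms E ⟶ E' is nonempty iff the set of vertical morphisms E ⟶ E'' is nonempty; (e) for every object E with p(E) = B, the set of vertical morphisms E' ⟶ E is nonempty iff the set of vertical morphisms E'' ⟶ E is nonempty. -/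
/-! Two objects of a fiber joined by vertical morphisms both ways are isomorphic in the fiber,
since by faithfulness the two composites are identities; skeletality then makes them equal.
Conditions (d) and (e), tested on `E'` and `E''` with their identities, produce such a pair.
Conditions (b) and (c) imply (d) and (e): a morphism between objects over `B` is vertical
exactly when its image, transported along the fiber equations, is the identity of `B`. -/

open CategoryTheory

universe v₁ u₁ v₂ u₂

variable {𝒳 : Type u₁} {𝒮 : Type u₂} [Category.{v₁} 𝒳] [Category.{v₂} 𝒮]

/-- A structure (of type `𝒳`) on `𝒮`: a faithful functor which lifts isomorphisms and has
skeletal fibers. -/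
structure IsCatStruct (p : 𝒳 ⥤ 𝒮) : Prop where
  faithful : ∀ {X Y : 𝒳} (f g : X ⟶ Y), p.map f = p.map g → f = g
  liftIso : ∀ (e : 𝒳) (b' : 𝒮) (f : b' ≅ p.obj e),
    ∃ (e' : 𝒳) (h : p.obj e' = b') (φ : e' ≅ e), p.map φ.hom = eqToHom h ≫ f.hom
  skeletalFibers : ∀ (X Y : 𝒳) (h : p.obj X = p.obj Y) (φ : X ≅ Y),
    p.map φ.hom = eqToHom h → X = Y

section

variable {p : 𝒳 ⥤ 𝒮} {B : 𝒮} {E E' : 𝒳}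

lemma exists_vertical_hom_to_iff_mem (h : p.obj E = B) (hE' : p.obj E' = B) :
    (∃ φ : E ⟶ E', p.map φ = eqToHom (h.trans hE'.symm)) ↔
      eqToHom h ∈ {u : p.obj E ⟶ B | ∃ φ : E ⟶ E', p.map φ ≫ eqToHom hE' = u} := by
  simp only [Set.mem_ofPred_eq, comp_eqToHom_iff, eqToHom_trans]

lemma exists_vertical_hom_from_iff_mem (h : p.obj E = B) (hE' : p.obj E' = B) :
    (∃ φ : E' ⟶ E, p.map φ = eqToHom (hE'.trans h.symm)) ↔
      eqToHom h.symm ∈ {u : B ⟶ p.obj E | ∃ φ : E' ⟶ E, eqToHom hE'.symm ≫ p.map φ = u} := by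
  simp only [Set.mem_ofPred_eq, eqToHom_comp_iff, eqToHom_trans]

end

namespace IsCatStruct

variable {p : 𝒳 ⥤ 𝒮} (hp : IsCatStruct p) {B : 𝒮} {E' E'' : 𝒳}
include hp

lemma eq_of_vertical_homs (h : p.obj E' = p.obj E'') (φ : E' ⟶ E'') (ψ : E'' ⟶ E')
    (hφ : p.map φ = eqToHom h) (hψ : p.map ψ = eqToHom h.symm) : E' = E'' :=
  hp.skeletalFibers E' E'' h
    { hom := φ
      inv := ψ
      hom_inv_id := hp.faithful _ _ (by simp [hφ, hψ])
      inv_hom_id := hp.faithful _ _ (by simp [hφ, hψ]) } hφ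

lemma eq_of_forall_exists_vertical_hom_to_iff (hE' : p.obj E' = B) (hE'' : p.obj E'' = B)
    (H : ∀ (E : 𝒳) (h : p.obj E = B),
      (∃ φ : E ⟶ E', p.map φ = eqToHom (h.trans hE'.symm)) ↔
        (∃ φ : E ⟶ E'', p.map φ = eqToHom (h.trans hE''.symm))) : E' = E'' := by
  obtain ⟨φ, hφ⟩ := (H E' hE').mp ⟨𝟙 E', by simp⟩
  obtain ⟨ψ, hψ⟩ := (H E'' hE'').mpr ⟨𝟙 E'', by simp⟩
  exact hp.eq_of_vertical_homs _ φ ψ hφ hψ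

lemma eq_of_forall_exists_vertical_hom_from_iff (hE' : p.obj E' = B) (hE'' : p.obj E'' = B)
    (H : ∀ (E : 𝒳) (h : p.obj E = B),
      (∃ φ : E' ⟶ E, p.map φ = eqToHom (hE'.trans h.symm)) ↔
        (∃ φ : E'' ⟶ E, p.map φ = eqToHom (hE''.trans h.symm))) : E' = E'' := by
  obtain ⟨φ, hφ⟩ := (H E'' hE'').mpr ⟨𝟙 E'', by simp⟩
  obtain ⟨ψ, hψ⟩ := (H E' hE').mp ⟨𝟙 E', by simp⟩
  exact hp.eq_of_vertical_homs _ φ ψ hφ hψ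

end IsCatStruct

/-- For a structure `p` on `𝒮` and objects `E', E''` in the fiber over `B`, the following
are equivalent: (a) `E' = E''`; (b) the `p`-images of `Hom(E, E')` and `Hom(E, E'')`
coincide in `Hom(p E, B)` for every `E`; (c) dually for hom-sets out of `E', E''`;
(d) existence of vertical morphisms into `E'` and into `E''` agree on the fiber;
(e) existence of vertical morphisms out of `E'` and out of `E''` agree on the fiber. -/
theorem struct_fiber_object_eq_tfae (p : 𝒳 ⥤ 𝒮) (hp : IsCatStruct p)
    {B : 𝒮} {E' E'' : 𝒳} (hE' : p.obj E' = B) (hE'' : p.obj E'' = B) :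
    ((E' = E'') ↔ ∀ E : 𝒳,
        {u : p.obj E ⟶ B | ∃ φ : E ⟶ E', p.map φ ≫ eqToHom hE' = u} =
        {u : p.obj E ⟶ B | ∃ φ : E ⟶ E'', p.map φ ≫ eqToHom hE'' = u}) ∧
    ((E' = E'') ↔ ∀ E : 𝒳,
        {u : B ⟶ p.obj E | ∃ φ : E' ⟶ E, eqToHom hE'.symm ≫ p.map φ = u} =
        {u : B ⟶ p.obj E | ∃ φ : E'' ⟶ E, eqToHom hE''.symm ≫ p.map φ = u}) ∧
    ((E' = E'') ↔ ∀ (E : 𝒳) (h : p.obj E = B),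
        ((∃ φ : E ⟶ E', p.map φ = eqToHom (h.trans hE'.symm)) ↔
          (∃ φ : E ⟶ E'', p.map φ = eqToHom (h.trans hE''.symm)))) ∧
    ((E' = E'') ↔ ∀ (E : 𝒳) (h : p.obj E = B),
        ((∃ φ : E' ⟶ E, p.map φ = eqToHom (hE'.trans h.symm)) ↔
          (∃ φ : E'' ⟶ E, p.map φ = eqToHom (hE''.trans h.symm)))) := by
  have hd := hp.eq_of_forall_exists_vertical_hom_to_iff hE' hE''
  have he := hp.eq_of_forall_exists_vertical_hom_from_iff hE' hE''
  refine ⟨⟨?_, fun H => hd fun E h => ?_⟩, ⟨?_, fun H => he fun E h => ?_⟩,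
    ⟨?_, hd⟩, ⟨?_, he⟩⟩
  · rintro rfl; simp
  · rw [exists_vertical_hom_to_iff_mem h hE', exists_vertical_hom_to_iff_mem h hE'', H E]
  · rintro rfl; simp
  · rw [exists_vertical_hom_from_iff_mem h hE', exists_vertical_hom_from_iff_mem h hE'', H E]
  · rintro rfl; simp
  · rintro rfl; simp
end

section
/- Let 𝐂 be a category with binary products and U : 𝐂 ⥤ Type a faithful functor that preserves binary products. If f : U(W) → Hom_𝐂(Y, Z) and g : U(W) → Hom_𝐂(X, Y) are generalized elements, then their pointwise composite w ↦ (g(w) ≫ f(w)) : U(W) → Hom_𝐂(X, Z) is a generalized element; moreover, for every object X, the constant function U(W) → Hom_𝐂(X, X), w ↦ 𝟙 X, is a generalized element. (Hence the hom-sets of 𝐂 are enriched in presheaves of generalized elements.) -/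
open CategoryTheory CategoryTheory.Limits

universe w v u

variable {C : Type u} [Category.{v} C] [HasBinaryProducts C]

/-- `f : U(Z) → Hom(X, Y)` is a generalized element of `Hom(X, Y)` with domain `U(Z)`:
there is `h : Z ⨯ X ⟶ Y` in `C` lifting the evaluation of `f`. -/
def IsGenElt (U : C ⥤ Type w) {X Y Z : C} (f : U.obj Z → (X ⟶ Y)) : Prop :=
  ∃ h : (Z ⨯ X : C) ⟶ Y, ∀ w : U.obj (Z ⨯ X),
    U.map h w = U.map (f (U.map prod.fst w)) (U.map prod.snd w)

namespace IsGenElt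

variable {U : C ⥤ Type w} {W X Y Z : C}

/-- If `F` and `G` witness `f` and `g`, then `⟨fst, G⟩ ≫ F` witnesses `g ≫ f`: it sends
`(w, x)` to `(w, g w x)` and then to `f w (g w x)`. -/
theorem comp {f : U.obj W → (Y ⟶ Z)} {g : U.obj W → (X ⟶ Y)}
    (hf : IsGenElt U f) (hg : IsGenElt U g) : IsGenElt U (fun w => g w ≫ f w) := by
  obtain ⟨F, hF⟩ := hf
  obtain ⟨G, hG⟩ := hg
  refine ⟨prod.lift prod.fst G ≫ F, fun w => ?_⟩
  have fst_eq : U.map prod.fst (U.map (prod.lift prod.fst G) w) = U.map prod.fst w := by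
    rw [← Functor.map_comp_apply, prod.lift_fst]
  have snd_eq : U.map prod.snd (U.map (prod.lift prod.fst G) w) = U.map G w := by
    rw [← Functor.map_comp_apply, prod.lift_snd]
  rw [Functor.map_comp_apply, hF, fst_eq, snd_eq, hG, Functor.map_comp_apply]

theorem const (φ : X ⟶ Y) : IsGenElt U (fun _ : U.obj W => φ) :=
  ⟨prod.snd ≫ φ, fun w => U.map_comp_apply prod.snd φ w⟩

end IsGenElt

theorem isGenElt_mu_and_unit_general (U : C ⥤ Type w)
    {W X Y Z : C} (f : U.obj W → (Y ⟶ Z)) (g : U.obj W → (X ⟶ Y))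
    (hf : IsGenElt U f) (hg : IsGenElt U g) :
    IsGenElt U (fun w => g w ≫ f w) ∧
    ∀ X' : C, IsGenElt U (fun _ : U.obj W => 𝟙 X') :=
  ⟨hf.comp hg, fun X' => IsGenElt.const (𝟙 X')⟩

/-- If `U` is faithful and preserves binary products, then the pointwise composite of two
generalized elements is a generalized element, and constant identity functions are
generalized elements: the hom-sets of `C` are enriched in presheaves of generalized
elements. -/
theorem isGenElt_mu_and_unit (U : C ⥤ Type w) [U.Faithful]
    (hU : ∀ Z X : C, Function.Bijective
      (fun w : U.obj (Z ⨯ X) => (U.map prod.fst w, U.map prod.snd w)))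
    {W X Y Z : C} (f : U.obj W → (Y ⟶ Z)) (g : U.obj W → (X ⟶ Y))
    (hf : IsGenElt U f) (hg : IsGenElt U g) :
    IsGenElt U (fun w => g w ≫ f w) ∧
    ∀ X' : C, IsGenElt U (fun _ : U.obj W => 𝟙 X') :=
  isGenElt_mu_and_unit_general U f g hf hg
end

section
/- Let p : 𝐄 ⥤ 𝐁 be a structure on 𝐁 (faithful, lifting isomorphisms, with skeletal fibers), G a group, B an object of 𝐁, ρ : G →* Aut(B) a group homomorphism, and E an object with p(E) = B. Suppose σ : G → (E ⟶ E) is a function such that for every g ∈ G, σ(g) is a cartesian lift of (ρ(g)).hom (so p(σ(g)) = (ρ(g)).hom). Then each σ(g) is an isomorphism, σ(1) = 𝟙 E, and σ(g * h) = σ(h) ≫ σ(g) for all g, h ∈ G (where Aut(B) is a group with (ρ(g*h)).hom = (ρ(h)).hom ≫ (ρ(g)).hom); hence σ determines a group homomorphism G →* Aut(E) lifting ρ, i.e. the G-action ρ on B lifts to a G-action on E. -/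
/-!
A faithful functor is injective on endomorphism monoids, so endomorphisms `σ g` of `E` lying
over the automorphisms `ρ g` of `p(E)` compose as the `ρ g` do. A monoid hom from a group into
`End E` takes values in the units, which are exactly the automorphisms of `E`.
-/

open CategoryTheory

universe v₁ u₁ v₂ u₂

variable {𝒳 : Type u₁} {𝒮 : Type u₂} [Category.{v₁} 𝒳] [Category.{v₂} 𝒮]

/-- `φ : e' ⟶ e` is a (strongly) cartesian lift of `f : b' ⟶ p.obj e`, where the
equality `p.obj e' = b'` is witnessed by `h`. -/
def IsCartesianLift (p : 𝒳 ⥤ 𝒮) {e' e : 𝒳} {b' : 𝒮} (h : p.obj e' = b')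
    (f : b' ⟶ p.obj e) (φ : e' ⟶ e) : Prop :=
  p.map φ = eqToHom h ≫ f ∧
    ∀ (e'' : 𝒳) (ψ : e'' ⟶ e) (g : p.obj e'' ⟶ b'), p.map ψ = g ≫ f →
      ∃! χ : e'' ⟶ e', (p.map χ = g ≫ eqToHom h.symm ∧ ψ = χ ≫ φ)

namespace CategoryTheory.Functor

variable {C : Type*} {D : Type*} [Category C] [Category D] (p : C ⥤ D) [p.Faithful] {X : C}

def liftEnd {M : Type*} [Monoid M] (ρ : M →* End (p.obj X)) (σ : M → End X)
    (hσ : ∀ m, p.map (σ m) = ρ m) : M →* End X where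
  toFun := σ
  map_one' := p.map_injective <| by rw [hσ, map_one]; exact (p.mapEnd X).map_one.symm
  map_mul' m n := p.map_injective <| by
    rw [hσ, map_mul, ← hσ, ← hσ]; exact ((p.mapEnd X).map_mul (σ m) (σ n)).symm

def liftAut {G : Type*} [Group G] (ρ : G →* Aut (p.obj X)) (σ : G → End X)
    (hσ : ∀ g, p.map (σ g) = (ρ g).hom) : G →* Aut X :=
  (Aut.unitsEndEquivAut X).toMonoidHom.comp (p.liftEnd ((Aut.toEnd _).comp ρ) σ hσ).toHomUnits

end CategoryTheory.Functor

theorem IsCatStruct.faithful_functor {p : 𝒳 ⥤ 𝒮} (hp : IsCatStruct p) : p.Faithful :=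
  ⟨hp.faithful _ _⟩

theorem IsCartesianLift.map_eq {p : 𝒳 ⥤ 𝒮} {e' e : 𝒳} {f : p.obj e' ⟶ p.obj e} {φ : e' ⟶ e}
    (h : IsCartesianLift p rfl f φ) : p.map φ = f := by
  simpa using h.1

/-- For a structure `p` on `𝒮`, a `G`-action `ρ` on `B = p(E)`, and a choice `σ g` of a
cartesian lift of `(ρ g).hom` with domain and codomain `E`, the lifts are isomorphisms,
`σ 1 = 𝟙 E`, `σ (g * h) = σ h ≫ σ g`, and they assemble into a group homomorphism
`G →* Aut E` lifting `ρ`. -/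
theorem cartesian_lift_of_group_action (p : 𝒳 ⥤ 𝒮) (hp : IsCatStruct p)
    {G : Type*} [Group G] (E : 𝒳) (ρ : G →* Aut (p.obj E))
    (σ : G → (E ⟶ E))
    (hσ : ∀ g : G, IsCartesianLift p (e' := E) (e := E) rfl (ρ g).hom (σ g)) :
    (∀ g : G, IsIso (σ g)) ∧
    σ 1 = 𝟙 E ∧
    (∀ g h : G, σ (g * h) = σ h ≫ σ g) ∧
    ∃ ρ'' : G →* Aut E,
      (∀ g : G, (ρ'' g).hom = σ g) ∧ ∀ g : G, p.map (ρ'' g).hom = (ρ g).hom := by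
  have := hp.faithful_functor
  have hmap : ∀ g, p.map (σ g) = (ρ g).hom := fun g => (hσ g).map_eq
  let τ : G →* End E := p.liftEnd ((Aut.toEnd _).comp ρ) σ hmap
  let ρ' : G →* Aut E := p.liftAut ρ σ hmap
  exact ⟨fun g => (ρ' g).isIso_hom, τ.map_one, τ.map_mul, ρ', fun _ => rfl, hmap⟩
end

section
/- Let 𝐂 be a category with a terminal object and binary products, G a group object in 𝐂 with inverse inv : G ⟶ G, ρ : G ⨯ X ⟶ X an action on X, and i : Y ⟶ X a monomorphism. Let x : Z ⟶ G stabilize Y with witness ρₓ : Z ⨯ Y ⟶ Y, and suppose ρₓ is surjective in the second argument: for every object T and every t : T ⟶ Z, the map Hom_𝐂(T, Y) → Hom_𝐂(T, Y), s ↦ prod.lift t s ≫ ρₓ, is surjective. Then x ≫ inv : Z ⟶ G also stabilizes Y, i.e. there exists ρ' : Z ⨯ Y ⟶ Y with prod.map (x ≫ inv) i ≫ ρ = ρ' ≫ i. -/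
open CategoryTheory CategoryTheory.Limits

universe v u

variable {C : Type u} [Category.{v} C] [HasTerminal C] [HasBinaryProducts C]

/-- A group object structure on `G`. -/
structure IsGroupObject {G : C} (m : (G ⨯ G : C) ⟶ G) (e : (⊤_ C) ⟶ G)
    (inv : G ⟶ G) : Prop where
  mul_assoc : prod.map m (𝟙 G) ≫ m = (prod.associator G G G).hom ≫ prod.map (𝟙 G) m ≫ m
  one_mul : prod.lift (terminal.from G ≫ e) (𝟙 G) ≫ m = 𝟙 G
  mul_one : prod.lift (𝟙 G) (terminal.from G ≫ e) ≫ m = 𝟙 G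
  mul_inv : prod.lift (𝟙 G) inv ≫ m = terminal.from G ≫ e
  inv_mul : prod.lift inv (𝟙 G) ≫ m = terminal.from G ≫ e

/-- `ρ : G ⨯ X ⟶ X` is an action of the group object `G` on `X`. -/
structure IsAction {G X : C} (m : (G ⨯ G : C) ⟶ G) (e : (⊤_ C) ⟶ G)
    (ρ : (G ⨯ X : C) ⟶ X) : Prop where
  assoc : prod.map m (𝟙 X) ≫ ρ = (prod.associator G G X).hom ≫ prod.map (𝟙 G) ρ ≫ ρ
  unit : prod.map e (𝟙 X) ≫ ρ = prod.snd

/-!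
If `ρₓ(z, y') = y` then `x(z) · y' = y`, so `x(z)⁻¹ · y = y'`. Surjectivity of `ρₓ` in its
second argument, applied to the generic element `(z, y) = (fst, snd)` of `Z ⨯ Y`, produces such a
`y'` as a morphism `s : Z ⨯ Y ⟶ Y`, and `s` is the required witness for `x ≫ inv`.
-/

namespace IsGroupObject

variable {G : C} {m : (G ⨯ G : C) ⟶ G} {e : (⊤_ C) ⟶ G} {inv : G ⟶ G}

theorem lift_comp_inv_mul (hG : IsGroupObject m e inv) {T : C} (g : T ⟶ G) :
    prod.lift (g ≫ inv) g ≫ m = terminal.from T ≫ e := by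
  have h := g ≫= hG.inv_mul
  simp only [prod.comp_lift_assoc, Category.comp_id] at h
  rw [h, ← Category.assoc, terminal.comp_from]

end IsGroupObject

namespace IsAction

variable {G X : C} {m : (G ⨯ G : C) ⟶ G} {e : (⊤_ C) ⟶ G} {ρ : (G ⨯ X : C) ⟶ X}

theorem lift_lift_comp (hρ : IsAction m e ρ) {T : C} (g h : T ⟶ G) (y : T ⟶ X) :
    prod.lift g (prod.lift h y ≫ ρ) ≫ ρ = prod.lift (prod.lift g h ≫ m) y ≫ ρ := by
  have hassoc := prod.lift (prod.lift g h) y ≫= hρ.assoc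
  simp only [prod.lift_map_assoc, Category.comp_id, prod.associator_hom, prod.comp_lift_assoc,
    prod.lift_fst, prod.lift_snd, prod.lift_fst_assoc] at hassoc
  exact hassoc.symm

theorem lift_one_comp (hρ : IsAction m e ρ) {T : C} (w : T ⟶ ⊤_ C) (y : T ⟶ X) :
    prod.lift (w ≫ e) y ≫ ρ = y := by
  simpa using (prod.lift w y ≫= hρ.unit).trans (prod.lift_snd w y)

theorem lift_inv_lift_comp {inv : G ⟶ G} (hG : IsGroupObject m e inv) (hρ : IsAction m e ρ)
    {T : C} (g : T ⟶ G) (y : T ⟶ X) :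
    prod.lift (g ≫ inv) (prod.lift g y ≫ ρ) ≫ ρ = y := by
  rw [hρ.lift_lift_comp, hG.lift_comp_inv_mul, hρ.lift_one_comp]

end IsAction

theorem stabilizes_inv_general {G X Y : C}
    (m : (G ⨯ G : C) ⟶ G) (e : (⊤_ C) ⟶ G) (inv : G ⟶ G)
    (hG : IsGroupObject m e inv)
    (ρ : (G ⨯ X : C) ⟶ X) (hρ : IsAction m e ρ)
    (i : Y ⟶ X)
    {Z : C} (x : Z ⟶ G) (ρx : (Z ⨯ Y : C) ⟶ Y)
    (hx : prod.map x i ≫ ρ = ρx ≫ i)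
    (hsurj : ∀ (T : C) (t : T ⟶ Z),
      Function.Surjective (fun s : T ⟶ Y => prod.lift t s ≫ ρx)) :
    ∃ ρ' : (Z ⨯ Y : C) ⟶ Y, prod.map (x ≫ inv) i ≫ ρ = ρ' ≫ i := by
  obtain ⟨s, hs⟩ := hsurj (Z ⨯ Y) prod.fst prod.snd
  have hxs : prod.lift (prod.fst ≫ x) (s ≫ i) ≫ ρ = prod.snd ≫ i := by
    have h : prod.lift prod.fst s ≫ prod.map x i ≫ ρ = prod.snd ≫ i := by
      rw [hx, reassoc_of% hs]
    simpa using h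
  refine ⟨s, ?_⟩
  calc prod.map (x ≫ inv) i ≫ ρ
      = prod.lift ((prod.fst ≫ x) ≫ inv) (prod.snd ≫ i) ≫ ρ := by simp [prod.map]
    _ = prod.lift ((prod.fst ≫ x) ≫ inv) (prod.lift (prod.fst ≫ x) (s ≫ i) ≫ ρ) ≫ ρ := by
        rw [hxs]
    _ = s ≫ i := hρ.lift_inv_lift_comp hG _ _

/-- If `x : Z ⟶ G` stabilizes `Y` with a witness `ρₓ` that is surjective in the second
argument, then `x ≫ inv` also stabilizes `Y`. -/
theorem stabilizes_inv {G X Y : C}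
    (m : (G ⨯ G : C) ⟶ G) (e : (⊤_ C) ⟶ G) (inv : G ⟶ G)
    (hG : IsGroupObject m e inv)
    (ρ : (G ⨯ X : C) ⟶ X) (hρ : IsAction m e ρ)
    (i : Y ⟶ X) [Mono i]
    {Z : C} (x : Z ⟶ G) (ρx : (Z ⨯ Y : C) ⟶ Y)
    (hx : prod.map x i ≫ ρ = ρx ≫ i)
    (hsurj : ∀ (T : C) (t : T ⟶ Z),
      Function.Surjective (fun s : T ⟶ Y => prod.lift t s ≫ ρx)) :
    ∃ ρ' : (Z ⨯ Y : C) ⟶ Y, prod.map (x ≫ inv) i ≫ ρ = ρ' ≫ i :=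
  stabilizes_inv_general m e inv hG ρ hρ i x ρx hx hsurj
end
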